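/- Let m ≥ 2 and 1 ≤ k ≤ m. Take f_1 = ⋯ = f_k = χ_{(−1,1)} and f_{k+1} = ⋯ = f_m ≡ 1. Then there is a constant c > 0, depending only on m and k, such that S^m(f_1,…,f_m)(x) ≥ c |x|^{−k} for every x with |x| ≥ 2. Consequently, with p_1 = ⋯ = p_k = 1 and p_{k+1} = ⋯ = p_m = ∞ and p = 1/k, the strong-type bound ‖S^m(g_1,…,g_m)‖_{L^p(ℝ)} ≤ C Π_{i=1}^m ‖g_i‖_{L^{p_i}(ℝ)} fails for every finite constant C. -/

import Mathlib

/-!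
In polar coordinates, averages over spheres centred at the origin dominate averages over balls:
for `F ≥ 0` on `ℝ^m`, `∫_{B(0,R)} F ≤ |B(0,R)| · sup_{t>0} ⨍_{S^{m-1}} F(t y) dσ(y)`.
For `F(z) = ∏ |f_i(x - z_i)|` the right-hand side is `|B(0,R)| · S^m(f)(x)`, and `F = 1` on the box
`(x-1, x+1)^k × (x-|x|, x+|x|)^{m-k}`, of volume `2^m |x|^{m-k}`, which lies in the ball of radius
`2 √m |x|`. Hence `S^m(f)(x) ≳ |x|^{m-k} / |x|^m = |x|^{-k}`, so `S^m(f)^{1/k} ≳ |x|^{-1}` is not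
integrable at infinity, although every `f_i` lies in `L^{p_i}`.
-/

open MeasureTheory Real Set
open scoped ENNReal NNReal

/-- The bilinear spherical maximal function in dimension one:
`S²(f,g)(x) = sup_{t>0} (2π)⁻¹ ∫_0^{2π} |f(x - t cos θ)| |g(x - t sin θ)| dθ`. -/
noncomputable def S2 (f g : ℝ → ℝ) (x : ℝ) : ℝ≥0∞ :=
  ⨆ (t : ℝ) (_ : 0 < t),
    (ENNReal.ofReal (2 * π))⁻¹ *
      ∫⁻ θ in Set.Ioc (0 : ℝ) (2 * π),
        ENNReal.ofReal (|f (x - t * Real.cos θ)| * |g (x - t * Real.sin θ)|)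

/-- The normalized surface measure on the unit sphere `S^{m-1} ⊆ ℝ^m`. -/
noncomputable def sphMeasure (m : ℕ) :
    Measure (Metric.sphere (0 : EuclideanSpace ℝ (Fin m)) 1) :=
  ((volume : Measure (EuclideanSpace ℝ (Fin m))).toSphere Set.univ)⁻¹ •
    (volume : Measure (EuclideanSpace ℝ (Fin m))).toSphere

/-- The multilinear spherical average
`S^m_t(|f₁|,…,|f_m|)(x) = ∫_{S^{m-1}} ∏ |f_i(x - t y_i)| dσ_{m-1}(y)`. -/
noncomputable def sphAvg (m : ℕ) (f : Fin m → ℝ → ℝ) (t x : ℝ) : ℝ≥0∞ :=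
  ∫⁻ y : Metric.sphere (0 : EuclideanSpace ℝ (Fin m)) 1,
    ∏ i, ENNReal.ofReal |f i (x - t * (y : EuclideanSpace ℝ (Fin m)) i)| ∂(sphMeasure m)

/-- The multilinear spherical maximal function `S^m(f₁,…,f_m)(x) = sup_{t>0} S^m_t(|f₁|,…,|f_m|)(x)`. -/
noncomputable def Sm (m : ℕ) (f : Fin m → ℝ → ℝ) (x : ℝ) : ℝ≥0∞ :=
  ⨆ (t : ℝ) (_ : 0 < t), sphAvg m f t x

/-- The `L^p(ℝ)` norm of an `ℝ≥0∞`-valued function. -/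
noncomputable def lpNorm (p : ℝ≥0∞) (F : ℝ → ℝ≥0∞) : ℝ≥0∞ :=
  if p = ∞ then essSup F volume
  else (∫⁻ x, F x ^ p.toReal) ^ (1 / p.toReal)

/-- The weak `L^{p,∞}(ℝ)` quasinorm of an `ℝ≥0∞`-valued function. -/
noncomputable def wLpNorm (p : ℝ≥0∞) (F : ℝ → ℝ≥0∞) : ℝ≥0∞ :=
  ⨆ (l : ℝ≥0∞) (_ : 0 < l), l * (volume {x | l < F x}) ^ (1 / p.toReal)

/-- The `k`-linear Hardy–Littlewood maximal function
`M^k(g₁,…,g_k)(x) = sup_{t>0} ∫_{B^k(0,1)} ∏ |g_i(x - t y_i)| dy`. -/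
noncomputable def Mk (k : ℕ) (g : Fin k → ℝ → ℝ) (x : ℝ) : ℝ≥0∞ :=
  ⨆ (t : ℝ) (_ : 0 < t),
    ∫⁻ y in Metric.ball (0 : EuclideanSpace ℝ (Fin k)) 1,
      ∏ i, ENNReal.ofReal |g i (x - t * y i)| ∂volume


namespace MeasureTheory.Measure

variable {E : Type*} [NormedAddCommGroup E] [NormedSpace ℝ E] [MeasurableSpace E] [BorelSpace E]
  [FiniteDimensional ℝ E] [Nontrivial E] (μ : Measure E) [μ.IsAddHaarMeasure]

theorem lintegral_eq_lintegral_toSphere_prod {F : E → ℝ≥0∞} (hF : Measurable F) :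
    ∫⁻ x, F x ∂μ = ∫⁻ p, F ((p.2 : ℝ) • (p.1 : E))
      ∂(μ.toSphere.prod (volumeIoiPow (Module.finrank ℝ E - 1))) := by
  have hpolar :
      Measurable fun p : Metric.sphere (0 : E) 1 × Ioi (0 : ℝ) => (p.2 : ℝ) • (p.1 : E) := by
    fun_prop
  calc ∫⁻ x, F x ∂μ = ∫⁻ x : ({0}ᶜ : Set E), F x ∂(μ.comap (↑)) := by
        rw [lintegral_subtype_comap (measurableSet_singleton _).compl, restrict_compl_singleton]
    _ = ∫⁻ x, (F ∘ fun p : Metric.sphere (0 : E) 1 × Ioi (0 : ℝ) => (p.2 : ℝ) • (p.1 : E))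
          (homeomorphUnitSphereProd E x) ∂(μ.comap (↑)) := by
        congr 1 with z
        simp [smul_smul, mul_inv_cancel₀ (norm_ne_zero_iff.2 z.2)]
    _ = _ := μ.measurePreserving_homeomorphUnitSphereProd.lintegral_comp (hF.comp hpolar)

theorem lintegral_ball_eq_lintegral_Iio_toSphere {F : E → ℝ≥0∞} (hF : Measurable F) (R : ℝ) :
    ∫⁻ x in Metric.ball 0 R, F x ∂μ = ∫⁻ r, (Iio R).indicator 1 (r : ℝ) *
      ∫⁻ y, F ((r : ℝ) • (y : E)) ∂μ.toSphere ∂(volumeIoiPow (Module.finrank ℝ E - 1)) := by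
  have hFR := hF.indicator (measurableSet_ball (x := (0 : E)) (ε := R))
  rw [← lintegral_indicator measurableSet_ball, μ.lintegral_eq_lintegral_toSphere_prod hFR,
    lintegral_prod_symm _ (by fun_prop)]
  congr 1 with r
  rw [← lintegral_const_mul _ (by fun_prop)]
  congr 1 with y
  have hnorm : ‖(r : ℝ) • (y : E)‖ = r := by simp [norm_smul, abs_of_pos r.2.out]
  by_cases hr : (r : ℝ) < R <;> simp [indicator, hnorm, hr]

theorem lintegral_ball_le_measure_ball_mul {F : E → ℝ≥0∞} (hF : Measurable F) (R : ℝ) {S : ℝ≥0∞}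
    (hS : ∀ t : ℝ, 0 < t → ∫⁻ y, F (t • (y : E)) ∂μ.toSphere ≤ μ.toSphere univ * S) :
    ∫⁻ x in Metric.ball 0 R, F x ∂μ ≤ μ (Metric.ball 0 R) * S := by
  have hball := μ.lintegral_ball_eq_lintegral_Iio_toSphere (F := 1) measurable_const R
  simp only [Pi.one_apply, lintegral_const, Measure.restrict_apply_univ, one_mul] at hball
  calc ∫⁻ x in Metric.ball 0 R, F x ∂μ
      = ∫⁻ r, (Iio R).indicator 1 (r : ℝ) * ∫⁻ y, F ((r : ℝ) • (y : E)) ∂μ.toSphere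
          ∂(volumeIoiPow (Module.finrank ℝ E - 1)) :=
        μ.lintegral_ball_eq_lintegral_Iio_toSphere hF R
    _ ≤ ∫⁻ r, (Iio R).indicator 1 (r : ℝ) * (μ.toSphere univ * S)
          ∂(volumeIoiPow (Module.finrank ℝ E - 1)) :=
        lintegral_mono fun r => by gcongr; exact hS r r.2
    _ = μ (Metric.ball 0 R) * S := by
        have hmeas :
            Measurable fun r : Ioi (0 : ℝ) => (Iio R).indicator 1 (r : ℝ) * μ.toSphere univ :=
          ((measurable_one.indicator measurableSet_Iio).comp measurable_subtype_coe).mul_const _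
        simp only [← mul_assoc]
        rw [lintegral_mul_const _ hmeas, hball]

end MeasureTheory.Measure

theorem toSphere_eq_smul_sphMeasure (m : ℕ) [NeZero m] :
    (volume : Measure (EuclideanSpace ℝ (Fin m))).toSphere =
      (volume : Measure (EuclideanSpace ℝ (Fin m))).toSphere univ • sphMeasure m := by
  rw [sphMeasure, smul_smul, ENNReal.mul_inv_cancel
    (Measure.measure_univ_ne_zero.2 (Measure.toSphere_ne_zero _)) (measure_ne_top _ _), one_smul]

theorem lintegral_ball_le_volume_ball_mul_Sm {m : ℕ} [NeZero m] {f : Fin m → ℝ → ℝ}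
    (hf : ∀ i, Measurable (f i)) (x R : ℝ) :
    ∫⁻ z in Metric.ball (0 : EuclideanSpace ℝ (Fin m)) R, ∏ i, ENNReal.ofReal |f i (x - z i)| ≤
      volume (Metric.ball (0 : EuclideanSpace ℝ (Fin m)) R) * Sm m f x := by
  refine volume.lintegral_ball_le_measure_ball_mul (by fun_prop) R fun t ht => ?_
  conv_lhs => rw [toSphere_eq_smul_sphMeasure, lintegral_smul_measure, smul_eq_mul]
  gcongr
  exact le_iSup₂ (f := fun t (_ : 0 < t) => sphAvg m f t x) t ht

noncomputable def counterexampleFamily (m k : ℕ) : Fin m → ℝ → ℝ := fun i =>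
  if (i : ℕ) < k then Set.indicator (Set.Ioo (-1 : ℝ) 1) 1 else fun _ => 1

theorem measurable_counterexampleFamily (m k : ℕ) (i : Fin m) :
    Measurable (counterexampleFamily m k i) := by
  unfold counterexampleFamily
  split
  · exact measurable_one.indicator measurableSet_Ioo
  · exact measurable_const

def counterexampleBox (m k : ℕ) (x : ℝ) : Set (EuclideanSpace ℝ (Fin m)) :=
  WithLp.ofLp ⁻¹' univ.pi fun i : Fin m => Metric.ball x (if (i : ℕ) < k then 1 else |x|)

theorem prod_counterexampleFamily_eq_one {m k : ℕ} {x : ℝ} {z : EuclideanSpace ℝ (Fin m)}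
    (hz : z ∈ counterexampleBox m k x) :
    ∏ i, ENNReal.ofReal |counterexampleFamily m k i (x - z i)| = 1 := by
  refine Finset.prod_eq_one fun i _ => ?_
  unfold counterexampleFamily
  split_ifs with hi
  · have hzi := hz i (mem_univ i)
    simp only [hi, if_true, Real.ball_eq_Ioo, mem_Ioo] at hzi
    rw [indicator_of_mem (by constructor <;> linarith)]
    simp
  · simp

theorem volume_counterexampleBox {m k : ℕ} (hk : k ≤ m) (x : ℝ) :
    volume (counterexampleBox m k x) = ENNReal.ofReal (2 ^ m * |x| ^ (m - k)) := by
  rw [counterexampleBox, (PiLp.volume_preserving_ofLp (Fin m)).measure_preimage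
    (MeasurableSet.univ_pi fun _ => measurableSet_ball).nullMeasurableSet, volume_pi_pi]
  simp only [Real.volume_ball]
  rw [← ENNReal.ofReal_prod_of_nonneg (fun i _ => by split_ifs <;> positivity)]
  congr 1
  have hcard : (Finset.univ.filter fun i : Fin m => k ≤ (i : ℕ)).card = m - k := by
    have := Finset.card_filter_add_card_filter_not (s := Finset.univ) fun i : Fin m => (i : ℕ) < k
    simp only [Fin.card_filter_val_lt, Finset.card_univ, Fintype.card_fin, not_lt] at this
    omega
  simp only [Finset.prod_mul_distrib, Finset.prod_const, Finset.prod_ite, Fin.card_filter_val_lt,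
    not_lt, hcard, Finset.card_univ, Fintype.card_fin, min_eq_right hk, one_pow, one_mul]

theorem counterexampleBox_subset_ball {m k : ℕ} [NeZero m] {x : ℝ} (hx : 1 ≤ |x|) :
    counterexampleBox m k x ⊆ Metric.ball 0 (2 * √m * |x|) := by
  intro z hz
  have hzi : ∀ i, |z i| < 2 * |x| := by
    intro i
    have := hz i (mem_univ i)
    rw [Metric.mem_ball, Real.dist_eq] at this
    have : |z i| ≤ |x| + |z i - x| := by simpa using abs_add_le x (z i - x)
    split_ifs at * <;> linarith
  have hm : (0 : ℝ) < m := Nat.cast_pos.2 (Nat.pos_of_neZero m)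
  rw [mem_ball_zero_iff, EuclideanSpace.norm_eq, Real.sqrt_lt' (by positivity), mul_pow, mul_pow,
    Real.sq_sqrt hm.le]
  calc ∑ i, ‖z i‖ ^ 2 < ∑ _i : Fin m, (2 * |x|) ^ 2 :=
        Finset.sum_lt_sum_of_nonempty Finset.univ_nonempty fun i _ => by
          rw [Real.norm_eq_abs]
          exact pow_lt_pow_left₀ (hzi i) (abs_nonneg _) two_ne_zero
    _ = 2 ^ 2 * m * |x| ^ 2 := by
          rw [Finset.sum_const, Finset.card_univ, Fintype.card_fin, nsmul_eq_mul]; ring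

theorem ofReal_le_Sm_counterexampleFamily {m k : ℕ} [NeZero m] (hk : k ≤ m) {x : ℝ} (hx : 1 ≤ |x|) :
    ENNReal.ofReal (2 ^ m * |x| ^ (m - k)) ≤
      ENNReal.ofReal ((2 * √m * |x|) ^ m) * volume (Metric.ball (0 : EuclideanSpace ℝ (Fin m)) 1) *
        Sm m (counterexampleFamily m k) x := by
  have hbox : MeasurableSet (counterexampleBox m k x) :=
    (MeasurableSet.univ_pi fun _ => measurableSet_ball).preimage (WithLp.measurable_ofLp 2 _)
  calc ENNReal.ofReal (2 ^ m * |x| ^ (m - k))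
      = ∫⁻ z in counterexampleBox m k x,
          ∏ i, ENNReal.ofReal |counterexampleFamily m k i (x - z i)| := by
        rw [setLIntegral_congr_fun hbox fun z hz => prod_counterexampleFamily_eq_one hz,
          setLIntegral_one, volume_counterexampleBox hk]
    _ ≤ ∫⁻ z in Metric.ball (0 : EuclideanSpace ℝ (Fin m)) (2 * √m * |x|),
          ∏ i, ENNReal.ofReal |counterexampleFamily m k i (x - z i)| :=
        lintegral_mono_set (counterexampleBox_subset_ball hx)
    _ ≤ volume (Metric.ball (0 : EuclideanSpace ℝ (Fin m)) (2 * √m * |x|)) *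
          Sm m (counterexampleFamily m k) x :=
        lintegral_ball_le_volume_ball_mul_Sm (measurable_counterexampleFamily m k) x _
    _ = _ := by rw [Measure.addHaar_ball _ _ (by positivity), finrank_euclideanSpace_fin]

theorem exists_pos_ofReal_le_Sm_counterexampleFamily {m k : ℕ} [NeZero m] (hk : k ≤ m) :
    ∃ c : ℝ, 0 < c ∧ ∀ x : ℝ, 1 ≤ |x| →
      ENNReal.ofReal (c * |x| ^ (-(k : ℝ))) ≤ Sm m (counterexampleFamily m k) x := by
  set V := volume (Metric.ball (0 : EuclideanSpace ℝ (Fin m)) 1)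
  have hV : 0 < V.toReal :=
    ENNReal.toReal_pos (Metric.measure_ball_pos _ _ one_pos).ne' measure_ball_lt_top.ne
  have hm : (0 : ℝ) < m := Nat.cast_pos.2 (Nat.pos_of_neZero m)
  refine ⟨2 ^ m / ((2 * √m) ^ m * V.toReal), by positivity, fun x hx => ?_⟩
  have hx0 : 0 < |x| := by linarith
  set A := ENNReal.ofReal ((2 * √m * |x|) ^ m) * V
  have hA : A = ENNReal.ofReal ((2 * √m * |x|) ^ m * V.toReal) := by
    rw [ENNReal.ofReal_mul (by positivity), ENNReal.ofReal_toReal measure_ball_lt_top.ne]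
  have hA0 : A ≠ 0 := by rw [hA]; exact (ENNReal.ofReal_pos.2 (by positivity)).ne'
  have hcancel : ENNReal.ofReal (2 ^ m / ((2 * √m) ^ m * V.toReal) * |x| ^ (-(k : ℝ))) * A =
      ENNReal.ofReal (2 ^ m * |x| ^ (m - k)) := by
    rw [hA, ← ENNReal.ofReal_mul (by positivity)]
    congr 1
    have hxm : |x| ^ m = |x| ^ (m - k) * |x| ^ k := by rw [← pow_add, Nat.sub_add_cancel hk]
    rw [Real.rpow_neg hx0.le, Real.rpow_natCast, mul_pow _ |x|, hxm]
    field_simp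
  rw [← ENNReal.mul_le_mul_iff_left hA0 (by rw [hA]; exact ENNReal.ofReal_ne_top), hcancel]
  exact (ofReal_le_Sm_counterexampleFamily hk hx).trans_eq (mul_comm _ _)

theorem memLp_counterexampleFamily (m k : ℕ) (i : Fin m) :
    MemLp (counterexampleFamily m k i) (if (i : ℕ) < k then 1 else ∞) volume := by
  unfold counterexampleFamily
  split_ifs
  · rw [memLp_one_iff_integrable, integrable_indicator_iff measurableSet_Ioo]
    exact integrableOn_const (by simp)
  · exact memLp_top_const 1

theorem lintegral_Ioi_ofReal_inv_eq_top {a : ℝ} (ha : 0 ≤ a) :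
    ∫⁻ t in Ioi a, ENNReal.ofReal t⁻¹ = ∞ := by
  by_contra h
  refine not_integrableOn_Ioi_inv ((lintegral_ofReal_ne_top_iff_integrable
    measurable_inv.aestronglyMeasurable ?_).1 h)
  filter_upwards [ae_restrict_mem measurableSet_Ioi] with t ht
  exact inv_nonneg.2 (ha.trans ht.le)

theorem lpNorm_inv_natCast_eq_top {F : ℝ → ℝ≥0∞} {k : ℕ} (hk : k ≠ 0) {c : ℝ} (hc : 0 < c)
    (hF : ∀ x : ℝ, 1 ≤ |x| → ENNReal.ofReal (c * |x| ^ (-(k : ℝ))) ≤ F x) :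
    lpNorm (k : ℝ≥0∞)⁻¹ F = ∞ := by
  have hk' : (0 : ℝ) < k := Nat.cast_pos.2 (Nat.pos_of_ne_zero hk)
  rw [_root_.lpNorm, if_neg (by simpa using hk), ENNReal.toReal_inv, ENNReal.toReal_natCast,
    one_div, inv_inv]
  suffices ∫⁻ x, F x ^ (k : ℝ)⁻¹ = ∞ by rw [this]; exact ENNReal.top_rpow_of_pos hk'
  refine eq_top_iff.2 ?_
  calc ∞ = ∫⁻ t in Ioi 1, ENNReal.ofReal (c ^ (k : ℝ)⁻¹) * ENNReal.ofReal t⁻¹ := by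
        rw [lintegral_const_mul _ measurable_inv.ennreal_ofReal,
          lintegral_Ioi_ofReal_inv_eq_top zero_le_one,
          ENNReal.mul_top (ENNReal.ofReal_pos.2 (by positivity)).ne']
    _ ≤ ∫⁻ t in Ioi 1, F t ^ (k : ℝ)⁻¹ := by
        refine setLIntegral_mono' measurableSet_Ioi fun t (ht : 1 < t) => ?_
        have ht' : |t| = t := abs_of_pos (by linarith)
        calc ENNReal.ofReal (c ^ (k : ℝ)⁻¹) * ENNReal.ofReal t⁻¹
            = ENNReal.ofReal (c * |t| ^ (-(k : ℝ))) ^ (k : ℝ)⁻¹ := by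
              rw [ENNReal.ofReal_rpow_of_nonneg (by positivity) (by positivity),
                ← ENNReal.ofReal_mul (by positivity),
                Real.mul_rpow hc.le (by positivity), ← Real.rpow_mul (abs_nonneg t), neg_mul,
                mul_inv_cancel₀ hk'.ne', Real.rpow_neg_one, ht']
          _ ≤ F t ^ (k : ℝ)⁻¹ :=
              ENNReal.rpow_le_rpow (hF t (by rw [ht']; exact ht.le)) (by positivity)
    _ ≤ ∫⁻ x, F x ^ (k : ℝ)⁻¹ := setLIntegral_le_lintegral _ _

theorem characteristic_counterexample_c_general (m k : ℕ) (hk1 : 1 ≤ k) (hkm : k ≤ m) :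
    let f : Fin m → ℝ → ℝ := fun i =>
      if (i : ℕ) < k then Set.indicator (Set.Ioo (-1 : ℝ) 1) 1 else fun _ => 1
    let p : Fin m → ℝ≥0∞ := fun i => if (i : ℕ) < k then 1 else ∞
    (∃ c : ℝ, 0 < c ∧ ∀ x : ℝ, 2 ≤ |x| →
        ENNReal.ofReal (c * |x| ^ (-(k : ℝ))) ≤ Sm m f x) ∧
      ∀ C : ℝ≥0∞, C ≠ ∞ →
        ¬ ∀ g : Fin m → ℝ → ℝ, (∀ i, MemLp (g i) (p i) volume) →
            lpNorm ((k : ℝ≥0∞))⁻¹ (Sm m g) ≤ C * ∏ i, eLpNorm (g i) (p i) volume := by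
  intro f p
  have : NeZero m := ⟨by omega⟩
  obtain ⟨c, hc, hlower⟩ := exists_pos_ofReal_le_Sm_counterexampleFamily (m := m) hkm
  refine ⟨⟨c, hc, fun x hx => hlower x (by linarith)⟩, fun C hC hbound => ?_⟩
  have hf := memLp_counterexampleFamily m k
  have hunbounded := hbound (counterexampleFamily m k) hf
  rw [lpNorm_inv_natCast_eq_top (by omega) hc hlower, top_le_iff] at hunbounded
  exact ENNReal.mul_ne_top hC (ENNReal.prod_ne_top fun i _ => (hf i).eLpNorm_ne_top) hunbounded

/-- with `f₁ = ⋯ = f_k = χ_{(-1,1)}` and `f_{k+1} = ⋯ = f_m ≡ 1`, one has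
`S^m(f₁,…,f_m)(x) ≳ |x|^{-k}` for `|x| ≥ 2`; consequently, for `p₁ = ⋯ = p_k = 1`,
`p_{k+1} = ⋯ = p_m = ∞` and `p = 1/k`, the strong-type bound fails for every finite `C`. -/
theorem characteristic_counterexample_c (m k : ℕ) (hm : 2 ≤ m) (hk1 : 1 ≤ k) (hkm : k ≤ m) :
    let f : Fin m → ℝ → ℝ := fun i =>
      if (i : ℕ) < k then Set.indicator (Set.Ioo (-1 : ℝ) 1) 1 else fun _ => 1
    let p : Fin m → ℝ≥0∞ := fun i => if (i : ℕ) < k then 1 else ∞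
    (∃ c : ℝ, 0 < c ∧ ∀ x : ℝ, 2 ≤ |x| →
        ENNReal.ofReal (c * |x| ^ (-(k : ℝ))) ≤ Sm m f x) ∧
      ∀ C : ℝ≥0∞, C ≠ ∞ →
        ¬ ∀ g : Fin m → ℝ → ℝ, (∀ i, MemLp (g i) (p i) volume) →
            lpNorm ((k : ℝ≥0∞))⁻¹ (Sm m g) ≤ C * ∏ i, eLpNorm (g i) (p i) volume :=
  characteristic_counterexample_c_general m k hk1 hkm
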